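/- Let R be a ring, C a class of left R-modules all of whose members are pure injective, and D a class of right R-modules with C^+ ⊆ D and D^+ ⊆ C. Then a homomorphism f : A → C of left R-modules with C ∈ C is a C-preenvelope of A if and only if f^+ : C^+ → A^+ is a D-precover of A^+. -/

import Mathlib

universe u

/-! Common definitions: character modules, purity, pure injectivity. -/

open MulOpposite


/-- The character group `M⁺ = Hom_ℤ(M, ℚ/ℤ)`. -/
def CharMod (M : Type u) [AddCommGroup M] : Type u := M →+ AddCircle (1 : ℚ)

instance (M : Type u) [AddCommGroup M] : AddCommGroup (CharMod M) :=
  inferInstanceAs (AddCommGroup (M →+ AddCircle (1 : ℚ)))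

instance (M : Type u) [AddCommGroup M] : FunLike (CharMod M) M (AddCircle (1 : ℚ)) :=
  inferInstanceAs (FunLike (M →+ AddCircle (1 : ℚ)) M (AddCircle (1 : ℚ)))

instance (M : Type u) [AddCommGroup M] :
    AddMonoidHomClass (CharMod M) M (AddCircle (1 : ℚ)) :=
  inferInstanceAs (AddMonoidHomClass (M →+ AddCircle (1 : ℚ)) M (AddCircle (1 : ℚ)))

/-- If `M` is a left `R`-module, `M⁺` is a right `R`-module via `(c • r) m = c (r • m)`. -/
instance CharMod.moduleOp (R : Type v) [Ring R] (M : Type u) [AddCommGroup M] [Module R M] :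
    Module Rᵐᵒᵖ (CharMod M) where
  smul r c := (c : M →+ AddCircle (1 : ℚ)).comp (DistribMulAction.toAddMonoidHom M r.unop)
  one_smul c := AddMonoidHom.ext fun m => congrArg c (one_smul R m)
  mul_smul r s c := AddMonoidHom.ext fun m => congrArg c (mul_smul s.unop r.unop m)
  smul_zero r := rfl
  smul_add r c d := rfl
  add_smul r s c := AddMonoidHom.ext fun m => by
    show c ((r.unop + s.unop) • m) = c (r.unop • m) + c (s.unop • m)
    rw [add_smul, map_add]
  zero_smul c := AddMonoidHom.ext fun m => by
    show c ((0 : R) • m) = 0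
    rw [zero_smul, map_zero]

@[simp] lemma CharMod.op_smul_apply {R : Type v} [Ring R] {M : Type u} [AddCommGroup M]
    [Module R M] (r : Rᵐᵒᵖ) (c : CharMod M) (m : M) : (r • c) m = c (r.unop • m) := rfl

/-- If `N` is a right `R`-module, `N⁺` is a left `R`-module via `(r • c) n = c (n • r)`. -/
instance CharMod.moduleUnop (R : Type v) [Ring R] (N : Type u) [AddCommGroup N] [Module Rᵐᵒᵖ N] :
    Module R (CharMod N) where
  smul r c := (c : N →+ AddCircle (1 : ℚ)).comp (DistribMulAction.toAddMonoidHom N (op r))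
  one_smul c := AddMonoidHom.ext fun n => congrArg c (one_smul Rᵐᵒᵖ n)
  mul_smul r s c := AddMonoidHom.ext fun n => by
    show c ((op (r * s)) • n) = c (op s • op r • n)
    rw [← mul_smul]; rfl
  smul_zero r := rfl
  smul_add r c d := rfl
  add_smul r s c := AddMonoidHom.ext fun n => by
    show c ((op (r + s)) • n) = c (op r • n) + c (op s • n)
    rw [show op (r + s) = op r + op s from rfl, add_smul, map_add]
  zero_smul c := AddMonoidHom.ext fun n => by
    show c ((op (0 : R)) • n) = 0
    rw [show op (0 : R) = (0 : Rᵐᵒᵖ) from rfl, zero_smul, map_zero]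

@[simp] lemma CharMod.unop_smul_apply {R : Type v} [Ring R] {N : Type u} [AddCommGroup N]
    [Module Rᵐᵒᵖ N] (r : R) (c : CharMod N) (n : N) : (r • c) n = c (op r • n) := rfl

/-- The dual `f⁺ : C⁺ → A⁺` of a map `f : A → C` of left `R`-modules. -/
def charDual {R : Type v} [Ring R] {A C : Type u} [AddCommGroup A] [Module R A]
    [AddCommGroup C] [Module R C] (f : A →ₗ[R] C) : CharMod C →ₗ[Rᵐᵒᵖ] CharMod A where
  toFun c := (c : C →+ AddCircle (1 : ℚ)).comp f.toAddMonoidHom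
  map_add' _ _ := rfl
  map_smul' r c := AddMonoidHom.ext fun a => (congrArg c (f.map_smul r.unop a)).symm

/-- The canonical evaluation map `σ_M : M → M⁺⁺`. -/
def charEval (R : Type v) [Ring R] (M : Type u) [AddCommGroup M] [Module R M] :
    M →ₗ[R] CharMod (CharMod M) where
  toFun m :=
    { toFun := fun c => c m
      map_zero' := rfl
      map_add' := fun _ _ => rfl }
  map_add' m m' := AddMonoidHom.ext fun c => c.map_add m m'
  map_smul' r m := AddMonoidHom.ext fun c => rfl

/-- A linear map `i : M → N` is a pure monomorphism if it is injective and every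
map from a finitely presented module to `N ⧸ im i` lifts to `N`, i.e. the short exact
sequence `0 → M → N → N ⧸ im i → 0` remains exact after applying `Hom(F, -)` for all
finitely presented `F`. -/
def IsPureMono {R : Type v} [Ring R] {M N : Type u} [AddCommGroup M] [Module R M]
    [AddCommGroup N] [Module R N] (i : M →ₗ[R] N) : Prop :=
  Function.Injective i ∧
    ∀ (F : Type u) [AddCommGroup F] [Module R F], Module.FinitePresentation R F →
      ∀ g : F →ₗ[R] (N ⧸ LinearMap.range i),
        ∃ h : F →ₗ[R] N, (LinearMap.range i).mkQ.comp h = g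

/-- A module `E` is pure injective if every map to `E` extends along pure monomorphisms. -/
def IsPureInjective (R : Type v) [Ring R] (E : Type u) [AddCommGroup E] [Module R E] : Prop :=
  ∀ (M N : Type u) [AddCommGroup M] [Module R M] [AddCommGroup N] [Module R N]
    (i : M →ₗ[R] N), IsPureMono i →
      ∀ f : M →ₗ[R] E, ∃ g : N →ₗ[R] E, g.comp i = f

/-! `σ_X : X → X⁺⁺` is a pure monomorphism, so it splits whenever `X` is pure injective.
A finite system of linear equations with constants in `X` that is solvable in `X⁺⁺` is solvable
in `X`: otherwise a character of `X^κ` separates the constants from the image of the system, and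
its components, paired with a solution in `X⁺⁺`, give a contradiction. With `σ_X` split, dualizing
twice transports factorizations through `f` to factorizations through `f⁺` and back. -/

section CharMod

variable {R : Type v} [Ring R]

lemma CharMod.sum_apply {M : Type u} [AddCommGroup M] {ι : Type*} (s : Finset ι)
    (c : ι → CharMod M) (m : M) : (∑ i ∈ s, c i) m = ∑ i ∈ s, c i m :=
  map_sum (AddMonoidHom.eval m : (M →+ AddCircle (1 : ℚ)) →+ _) c s

lemma CharMod.exists_apply_ne_zero_of_notMem {G : Type u} [AddCommGroup G] {S : AddSubgroup G}
    {x : G} (hx : x ∉ S) : ∃ χ : CharMod G, (∀ s ∈ S, χ s = 0) ∧ χ x ≠ 0 := by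
  obtain ⟨c, hc⟩ := CharacterModule.exists_character_apply_ne_zero_of_ne_zero
    (mt (QuotientAddGroup.eq_zero_iff x).mp hx)
  exact ⟨(c : G ⧸ S →+ AddCircle (1 : ℚ)).comp (QuotientAddGroup.mk' S),
    fun s hs => by
      change c (s : G ⧸ S) = 0
      rw [(QuotientAddGroup.eq_zero_iff s).mpr hs, map_zero], hc⟩

lemma CharMod.exists_pi_apply_ne_zero_of_notMem {X : Type u} [AddCommGroup X] {κ : Type*}
    [Fintype κ] {S : AddSubgroup (κ → X)} {x : κ → X} (hx : x ∉ S) :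
    ∃ χ : κ → CharMod X, (∀ v ∈ S, ∑ j, χ j (v j) = 0) ∧ ∑ j, χ j (x j) ≠ 0 := by
  classical
  obtain ⟨χ, hχS, hχx⟩ := CharMod.exists_apply_ne_zero_of_notMem hx
  have hχ : ∀ v : κ → X, χ v = ∑ j, χ (Pi.single j (v j)) := fun v => by
    conv_lhs => rw [← Finset.univ_sum_single v]
    exact map_sum χ _ _
  refine ⟨fun j => (χ : (κ → X) →+ _).comp (AddMonoidHom.single (fun _ => X) j), fun v hv => ?_, ?_⟩
  · exact (hχ v).symm.trans (hχS v hv)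
  · exact fun h => hχx ((hχ x).trans h)

@[simp] lemma charEval_apply {M : Type u} [AddCommGroup M] [Module R M] (m : M) (c : CharMod M) :
    charEval R M m c = c m := rfl

lemma charEval_injective (M : Type u) [AddCommGroup M] [Module R M] :
    Function.Injective (charEval R M) := by
  refine (injective_iff_map_eq_zero _).mpr fun m hm => ?_
  exact CharacterModule.eq_zero_of_character_apply fun c => DFunLike.congr_fun hm c

lemma exists_solution_of_charEval {X : Type u} [AddCommGroup X] [Module R X]
    {ι κ : Type*} [Fintype ι] [Fintype κ] (k : κ → ι → R) (x : κ → X)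
    (y : ι → CharMod (CharMod X)) (hy : ∀ j, ∑ i, k j i • y i = charEval R X (x j)) :
    ∃ z : ι → X, ∀ j, ∑ i, k j i • z i = x j := by
  classical
  by_contra hx
  let φ : (ι → X) →+ (κ → X) := AddMonoidHom.mk' (fun v j => ∑ i, k j i • v i) fun v w => by
    ext j; simp [smul_add, Finset.sum_add_distrib]
  obtain ⟨χ, hχφ, hχx⟩ := CharMod.exists_pi_apply_ne_zero_of_notMem (S := φ.range) (x := x)
    fun ⟨z, hz⟩ => hx ⟨z, fun j => congrFun hz j⟩
  have hχ : ∀ i, ∑ j, op (k j i) • χ j = 0 := fun i => AddMonoidHom.ext fun v => by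
    change (∑ j, op (k j i) • χ j) v = 0
    simpa [φ, CharMod.sum_apply, Pi.single_apply] using hχφ _ ⟨Pi.single i v, rfl⟩
  apply hχx
  calc ∑ j, χ j (x j) = ∑ j, ∑ i, y i (op (k j i) • χ j) := by
        refine Finset.sum_congr rfl fun j _ => ?_
        rw [← charEval_apply (R := R), ← hy j, CharMod.sum_apply]
        rfl
    _ = ∑ i, y i (∑ j, op (k j i) • χ j) := by
        rw [Finset.sum_comm]
        exact Finset.sum_congr rfl fun i _ => (map_sum (y i) _ _).symm
    _ = 0 := by simp [hχ]

end CharMod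

section Purity

variable {R : Type v} [Ring R]

lemma LinearMap.eq_linearCombination_single {ι M : Type*} [Fintype ι] [DecidableEq ι]
    [AddCommGroup M] [Module R M] (f : (ι → R) →ₗ[R] M) :
    f = Fintype.linearCombination R fun i => f (Pi.single i 1) :=
  LinearMap.pi_ext' fun i => LinearMap.ext_ring (by simp)

/-- In matrix terms, `hfill` says that every finite linear system with constants in `M` that is
solvable in `N` is already solvable in `M`. -/
lemma isPureMono_of_forall_exists_comp_eq {M N : Type u} [AddCommGroup M] [Module R M]
    [AddCommGroup N] [Module R N] (i : M →ₗ[R] N) (hi : Function.Injective i)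
    (hfill : ∀ (m n : ℕ) (a : (Fin m → R) →ₗ[R] (Fin n → R)) (G : (Fin n → R) →ₗ[R] N)
      (x : (Fin m → R) →ₗ[R] M), G ∘ₗ a = i ∘ₗ x → ∃ z : (Fin n → R) →ₗ[R] M, z ∘ₗ a = x) :
    IsPureMono i := by
  refine ⟨hi, fun F _ _ hF g => ?_⟩
  obtain ⟨n, m, p, a, hp, hpa⟩ := Module.FinitePresentation.exists_fin' R F
  obtain ⟨G, hG⟩ := Module.projective_lifting_property (LinearMap.range i).mkQ (g ∘ₗ p)
    (Submodule.mkQ_surjective _)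
  have hGa : ∀ v, G (a v) ∈ LinearMap.range i := fun v => by
    rw [← Submodule.ker_mkQ (LinearMap.range i), LinearMap.mem_ker, ← LinearMap.comp_apply, hG,
      LinearMap.comp_apply, hpa.apply_apply_eq_zero, map_zero]
  let x := (LinearEquiv.ofInjective i hi).symm.toLinearMap ∘ₗ (G ∘ₗ a).codRestrict _ hGa
  have hix : i ∘ₗ x = G ∘ₗ a := LinearMap.ext fun v => by simp [x]
  obtain ⟨z, hz⟩ := hfill m n a G x hix.symm
  -- correcting the lift `G` by `i ∘ z` makes it kill the relations `range a = ker p`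
  let H := G - i ∘ₗ z
  have hHa : LinearMap.range a ≤ LinearMap.ker H := by
    rintro _ ⟨v, rfl⟩
    rw [LinearMap.mem_ker, LinearMap.sub_apply, LinearMap.comp_apply, ← LinearMap.comp_apply z, hz,
      ← LinearMap.comp_apply i x, hix, LinearMap.comp_apply, sub_self]
  refine ⟨(LinearMap.range a).liftQ H hHa ∘ₗ (hpa.linearEquivOfSurjective hp).symm.toLinearMap,
    ?_⟩
  refine (LinearMap.cancel_right hp).mp (LinearMap.ext fun v => ?_)
  have hiz : (LinearMap.range i).mkQ (i (z v)) = 0 :=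
    (Submodule.Quotient.mk_eq_zero _).mpr (LinearMap.mem_range_self i _)
  simp only [LinearMap.comp_apply, LinearEquiv.coe_coe,
    Function.Exact.linearEquivOfSurjective_symm_apply, Submodule.liftQ_apply, H,
    LinearMap.sub_apply, map_sub, hiz, sub_zero]
  exact LinearMap.congr_fun hG v

lemma isPureMono_charEval (X : Type u) [AddCommGroup X] [Module R X] :
    IsPureMono (charEval R X) := by
  refine isPureMono_of_forall_exists_comp_eq _ (charEval_injective X) fun m n a G x h => ?_
  obtain ⟨z, hz⟩ := exists_solution_of_charEval (fun j i => a (Pi.single j 1) i)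
    (fun j => x (Pi.single j 1)) (fun i => G (Pi.single i 1)) fun j => by
      rw [← Fintype.linearCombination_apply, ← G.eq_linearCombination_single,
        ← LinearMap.comp_apply, h, LinearMap.comp_apply]
  refine ⟨Fintype.linearCombination R z, LinearMap.pi_ext' fun j => LinearMap.ext_ring ?_⟩
  simpa [Fintype.linearCombination_apply] using hz j

lemma IsPureInjective.exists_comp_charEval_eq_id {X : Type u} [AddCommGroup X] [Module R X]
    (hX : IsPureInjective R X) : ∃ ρ : CharMod (CharMod X) →ₗ[R] X, ρ ∘ₗ charEval R X = .id :=
  hX X _ (charEval R X) (isPureMono_charEval X) LinearMap.id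

end Purity

section Duality

/-- Unlike the usual notion, membership of `C` in `𝒞` is not required. -/
def IsPreenvelope {S : Type v} [Ring S] (𝒞 : ∀ (X : Type u) [AddCommGroup X] [Module S X], Prop)
    {A C : Type*} [AddCommGroup A] [Module S A] [AddCommGroup C] [Module S C]
    (f : A →ₗ[S] C) : Prop :=
  ∀ (X : Type u) [AddCommGroup X] [Module S X], 𝒞 X →
    ∀ g : A →ₗ[S] X, ∃ h : C →ₗ[S] X, h ∘ₗ f = g

def IsPrecover {S : Type v} [Ring S] (𝒟 : ∀ (Y : Type u) [AddCommGroup Y] [Module S Y], Prop)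
    {B D : Type*} [AddCommGroup B] [Module S B] [AddCommGroup D] [Module S D]
    (p : D →ₗ[S] B) : Prop :=
  ∀ (Y : Type u) [AddCommGroup Y] [Module S Y], 𝒟 Y →
    ∀ g : Y →ₗ[S] B, ∃ h : Y →ₗ[S] D, p ∘ₗ h = g

variable {R : Type v} [Ring R]

def charDualOp {Y Z : Type u} [AddCommGroup Y] [Module Rᵐᵒᵖ Y] [AddCommGroup Z] [Module Rᵐᵒᵖ Z]
    (g : Y →ₗ[Rᵐᵒᵖ] Z) : CharMod Z →ₗ[R] CharMod Y where
  toFun c := (c : Z →+ AddCircle (1 : ℚ)).comp g.toAddMonoidHom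
  map_add' _ _ := rfl
  map_smul' r c := AddMonoidHom.ext fun y => (congrArg c (g.map_smul (op r) y)).symm

def charEvalOp (R : Type v) [Ring R] (Y : Type u) [AddCommGroup Y] [Module Rᵐᵒᵖ Y] :
    Y →ₗ[Rᵐᵒᵖ] CharMod (CharMod Y) where
  toFun y :=
    { toFun := fun c => c y
      map_zero' := rfl
      map_add' := fun _ _ => rfl }
  map_add' y y' := AddMonoidHom.ext fun c => c.map_add y y'
  map_smul' _ _ := rfl

variable {A C : Type u} [AddCommGroup A] [Module R A] [AddCommGroup C] [Module R C]
  {𝒞 : ∀ (X : Type u) [AddCommGroup X] [Module R X], Prop}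
  {𝒟 : ∀ (Y : Type u) [AddCommGroup Y] [Module Rᵐᵒᵖ Y], Prop}

lemma charDual_comp {X : Type u} [AddCommGroup X] [Module R X] (f : A →ₗ[R] C) (h : C →ₗ[R] X) :
    charDual (h ∘ₗ f) = charDual f ∘ₗ charDual h := rfl

lemma IsPreenvelope.isPrecover_charDual
    (hDC : ∀ (Y : Type u) [AddCommGroup Y] [Module Rᵐᵒᵖ Y], 𝒟 Y → 𝒞 (CharMod Y))
    {f : A →ₗ[R] C} (hf : IsPreenvelope 𝒞 f) : IsPrecover 𝒟 (charDual f) := by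
  intro Y _ _ hY g
  obtain ⟨h, hh⟩ := hf _ (hDC Y hY) (charDualOp g ∘ₗ charEval R A)
  refine ⟨charDual h ∘ₗ charEvalOp R Y, ?_⟩
  rw [← LinearMap.comp_assoc, ← charDual_comp, hh]
  -- transposing the transpose `A → Y⁺` of `g` gives back `g`
  rfl

lemma IsPrecover.isPreenvelope_of_charDual
    (hPI : ∀ (X : Type u) [AddCommGroup X] [Module R X], 𝒞 X → IsPureInjective R X)
    (hCD : ∀ (X : Type u) [AddCommGroup X] [Module R X], 𝒞 X → 𝒟 (CharMod X))
    {f : A →ₗ[R] C} (hf : IsPrecover 𝒟 (charDual f)) : IsPreenvelope 𝒞 f := by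
  intro X _ _ hX g
  obtain ⟨ρ, hρ⟩ := (hPI X hX).exists_comp_charEval_eq_id
  obtain ⟨h, hh⟩ := hf _ (hCD X hX) (charDual g)
  have hσ : charDualOp h ∘ₗ charEval R C ∘ₗ f = charEval R X ∘ₗ g :=
    LinearMap.ext fun a => AddMonoidHom.ext fun χ => DFunLike.congr_fun (LinearMap.congr_fun hh χ) a
  refine ⟨ρ ∘ₗ charDualOp h ∘ₗ charEval R C, ?_⟩
  calc (ρ ∘ₗ charDualOp h ∘ₗ charEval R C) ∘ₗ f = ρ ∘ₗ charEval R X ∘ₗ g := by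
        rw [← hσ]; rfl
    _ = g := by rw [← LinearMap.comp_assoc, hρ, LinearMap.id_comp]

end Duality

/-- **Corollary (duality).** Let `𝒞` be a class of pure injective left `R`-modules and `𝒟` a
class of right `R`-modules with `𝒞⁺ ⊆ 𝒟` and `𝒟⁺ ⊆ 𝒞`. Then `f : A → C` (with `C ∈ 𝒞`) is a
`𝒞`-preenvelope of `A` iff `f⁺ : C⁺ → A⁺` is a `𝒟`-precover of `A⁺`. -/
theorem stmt14 {R : Type u} [Ring R] {A C : Type u}
    [AddCommGroup A] [Module R A] [AddCommGroup C] [Module R C]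
    (𝒞 : ∀ (X : Type u) [AddCommGroup X] [Module R X], Prop)
    (𝒟 : ∀ (Y : Type u) [AddCommGroup Y] [Module Rᵐᵒᵖ Y], Prop)
    (hPI : ∀ (X : Type u) [AddCommGroup X] [Module R X], 𝒞 X → IsPureInjective R X)
    (hCD : ∀ (X : Type u) [AddCommGroup X] [Module R X], 𝒞 X → 𝒟 (CharMod X))
    (hDC : ∀ (Y : Type u) [AddCommGroup Y] [Module Rᵐᵒᵖ Y], 𝒟 Y → 𝒞 (CharMod Y))
    (hC : 𝒞 C) (f : A →ₗ[R] C) :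
    -- `f` is a `𝒞`-preenvelope of `A` iff `f⁺` is a `𝒟`-precover of `A⁺`:
    (∀ (X : Type u) [AddCommGroup X] [Module R X], 𝒞 X →
        ∀ g : A →ₗ[R] X, ∃ h : C →ₗ[R] X, h.comp f = g) ↔
      (𝒟 (CharMod C) ∧
        ∀ (Y : Type u) [AddCommGroup Y] [Module Rᵐᵒᵖ Y], 𝒟 Y →
          ∀ g : Y →ₗ[Rᵐᵒᵖ] CharMod A, ∃ h : Y →ₗ[Rᵐᵒᵖ] CharMod C,
            (charDual f).comp h = g) :=
  ⟨fun hf => ⟨hCD C hC, IsPreenvelope.isPrecover_charDual hDC hf⟩,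
    fun ⟨_, hf⟩ => IsPrecover.isPreenvelope_of_charDual hPI hCD hf⟩
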